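/- Let M be a divisible torsion abelian group whose ℓ-torsion part is finite for every prime ℓ, with an automorphism φ such that the invariants M^φ = ker(φ-1) form a finite group. Then for every prime ℓ, the endomorphism φ - 1 is injective on the ℓ-adic Tate module T_ℓ(M) = Hom(ℚ_ℓ/ℤ_ℓ, M), hence φ - 1 is injective on T(M) = ∏_ℓ T_ℓ(M). -/
import Mathlib


/-- The `ℓ`-adic Tate module of an abelian group `M`, realized as the inverse limit of the
`ℓ^i`-torsion subgroups along multiplication-by-`ℓ` maps. -/
def tateModule (ℓ : ℕ) (M : Type) [AddCommGroup M] : Set (ℕ → M) :=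
  {s | (∀ i, ℓ ^ i • s i = 0) ∧ ∀ i, ℓ • s (i + 1) = s i}

/-- Let `M` be a divisible torsion abelian group whose `ℓ`-torsion part is finite for every
prime `ℓ`, with an automorphism `φ` whose invariants `M^φ` form a finite group. Then for
every prime `ℓ`, the endomorphism `φ - 1` is injective on the `ℓ`-adic Tate module
`T_ℓ(M)`, hence `φ - 1` is injective on `T(M) = ∏_ℓ T_ℓ(M)`. -/
theorem statement2 {M : Type} [AddCommGroup M] (φ : M ≃+ M)
    (hdiv : ∀ n : ℕ, 0 < n → Function.Surjective (fun m : M => n • m))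
    (htor : ∀ m : M, ∃ n : ℕ, 0 < n ∧ n • m = 0)
    (hfin : ∀ ℓ : ℕ, ℓ.Prime → Finite {m : M // ℓ • m = 0})
    (hinv : Finite {m : M // φ m = m}) :
    ∀ ℓ : ℕ, ℓ.Prime →
      ∀ s t : ℕ → M, s ∈ tateModule ℓ M → t ∈ tateModule ℓ M →
        (∀ i, φ (s i) - s i = φ (t i) - t i) → s = t := by
  intro ℓ hℓ s t hs ht hst
  -- the fixed-point subgroup
  set F : AddSubgroup M :=
    { carrier := {m | φ m = m}
      zero_mem' := by simp
      add_mem' := by intro a b ha hb; simp only [Set.mem_setOf_eq] at *; rw [map_add, ha, hb]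
      neg_mem' := by intro a ha; simp only [Set.mem_setOf_eq] at *; rw [map_neg, ha] } with hF
  have : Finite F := hinv
  set u : ℕ → M := fun i => s i - t i with hu
  have huF : ∀ i, u i ∈ F := by
    intro i
    show φ (s i - t i) = s i - t i
    rw [map_sub]
    have := hst i
    abel_nf
    abel_nf at this
    linear_combination (norm := abel) this
  set k : ℕ := Nat.card F with hk
  have hk0 : k ≠ 0 := Nat.card_ne_zero.2 ⟨⟨0, F.zero_mem⟩, inferInstance⟩
  have hku : ∀ i, k • u i = 0 := by
    intro i
    have : k • (⟨u i, huF i⟩ : F) = 0 := card_nsmul_eq_zero'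
    exact congrArg Subtype.val this
  -- u i = ℓ^c • u (i+c)
  have hdesc : ∀ i c, ℓ ^ c • u (i + c) = u i := by
    intro i c
    induction c with
    | zero => simp
    | succ c ih =>
      have h1 : ℓ • u (i + c + 1) = u (i + c) := by
        show ℓ • (s (i+c+1) - t (i+c+1)) = s (i+c) - t (i+c)
        rw [smul_sub, hs.2 (i+c), ht.2 (i+c)]
      calc ℓ ^ (c+1) • u (i + (c+1)) = ℓ ^ c • (ℓ • u (i + c + 1)) := by
            rw [← mul_smul, pow_succ, mul_comm, ← add_assoc]
        _ = u i := by rw [h1, ih]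
  -- torsion bound
  have htorℓ : ∀ i, ℓ ^ i • u i = 0 := by
    intro i
    show ℓ ^ i • (s i - t i) = 0
    rw [smul_sub, hs.1 i, ht.1 i, sub_zero]
  set v : ℕ := k.factorization ℓ with hv
  have key : ∀ j, ℓ ^ v • u j = 0 := by
    intro j
    have h1 : addOrderOf (u j) ∣ ℓ ^ j := addOrderOf_dvd_of_nsmul_eq_zero (htorℓ j)
    have h2 : addOrderOf (u j) ∣ k := addOrderOf_dvd_of_nsmul_eq_zero (hku j)
    obtain ⟨a, ha, hae⟩ := (Nat.dvd_prime_pow hℓ).1 h1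
    have hav : a ≤ v := (Nat.Prime.pow_dvd_iff_le_factorization hℓ hk0).1 (hae ▸ h2)
    have : addOrderOf (u j) ∣ ℓ ^ v := hae ▸ pow_dvd_pow ℓ hav
    exact addOrderOf_dvd_iff_nsmul_eq_zero.1 this
  have hu0 : ∀ i, u i = 0 := by
    intro i
    rw [← hdesc i v, key (i + v)]
  funext i
  have := hu0 i
  have : s i - t i = 0 := this
  exact sub_eq_zero.1 this
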